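/- Define Ī : {(p,q,r) ∈ ℝ³ : p ≠ 0} → ℝ by Ī(p,q,r) = (2pr − 3q²)/(2p⁴). Then for every x ∈ ℝ and every (p,q,r) with p ≠ 0, one has 2xp·(∂Ī/∂p)(p,q,r) + (2p + 4xq)·(∂Ī/∂q)(p,q,r) + (6q + 6xr)·(∂Ī/∂r)(p,q,r) = 0; that is, Ī is annihilated by the third prolongation of the vector field x² ∂/∂x on ℝ². -/
import Mathlib


/-- `Ī(p,q,r) = (2pr − 3q²)/(2p⁴)` in derivative coordinates `(p,q,r) = (u₁,u₂,u₃)`. -/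
noncomputable def Ibar (p q r : ℝ) : ℝ := (2 * p * r - 3 * q ^ 2) / (2 * p ^ 4)

/-- `Ī` is annihilated by the third prolongation
`v₃⁽³⁾ = x² ∂/∂x − 2x u₁ ∂/∂u₁ − (2u₁ + 4x u₂) ∂/∂u₂ − (6u₂ + 6x u₃) ∂/∂u₃`
of the vector field `x² ∂/∂x` on `ℝ²`. -/
theorem stmt1 (x p q r : ℝ) (hp : p ≠ 0) :
    2 * x * p * deriv (fun p' => Ibar p' q r) p
      + (2 * p + 4 * x * q) * deriv (fun q' => Ibar p q' r) q
      + (6 * q + 6 * x * r) * deriv (fun r' => Ibar p q r') r = 0 := by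
  have hden : 2 * p ^ 4 ≠ 0 := by positivity
  have h1 : HasDerivAt (fun p' => Ibar p' q r)
      ((2 * r * (2 * p ^ 4) - (2 * p * r - 3 * q ^ 2) * (2 * (4 * p ^ 3))) / (2 * p ^ 4) ^ 2) p := by
    unfold Ibar
    exact HasDerivAt.div (by simpa using ((hasDerivAt_id p).const_mul 2 |>.mul_const r |>.sub_const (3 * q ^ 2)))
      (by simpa using (hasDerivAt_pow 4 p).const_mul 2) hden
  have h2 : HasDerivAt (fun q' => Ibar p q' r) ((-(3 * (2 * q))) / (2 * p ^ 4)) q := by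
    unfold Ibar
    exact HasDerivAt.div_const (by simpa using ((hasDerivAt_pow 2 q).const_mul 3 |>.const_sub (2 * p * r))) _
  have h3 : HasDerivAt (fun r' => Ibar p q r') ((2 * p) / (2 * p ^ 4)) r := by
    unfold Ibar
    exact HasDerivAt.div_const (by simpa using (hasDerivAt_id r).const_mul (2 * p) |>.sub_const (3 * q ^ 2)) _
  rw [h1.deriv, h2.deriv, h3.deriv]
  field_simp
  ring
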